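/- In Example 4's environment, any process M over alphabet {a₀, a₁} whose state M₀ reached after the initial a₀ enables only a₀ (not a₁), or only a₁ (not a₀), is blocking: E ∥ M has a maximal finite computation. That is, after the nondeterministic a₀ step, a non-blocking coordinator must enable both a₀ and a₁. -/
import Mathlib


/-- Actions of Example 4: all public. -/
inductive Act where
  | a0 : Act
  | a1 : Act
deriving DecidableEq

/-- Environment states of Example 4. -/
inductive ESt where
  | E : ESt
  | E0 : ESt
  | E1 : ESt
deriving DecidableEq

/-- Environment transitions: E →a₀ E₀, E →a₀ E₁, E₀ →a₀ E₀, E₁ →a₁ E₁. -/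
def Etrans : ESt → Act → ESt → Prop := fun s a t =>
  match s, a, t with
  | .E, .a0, .E0 => True
  | .E, .a0, .E1 => True
  | .E0, .a0, .E0 => True
  | .E1, .a1, .E1 => True
  | _, _, _ => False

/-- Composition `E ∥ M` synchronizing on all (public) actions `{a₀, a₁}`. -/
def Ctrans {S : Type*} (mtrans : S → Act → S → Prop) :
    ESt × S → Act → ESt × S → Prop := fun c a c' =>
  Etrans c.1 a c'.1 ∧ mtrans c.2 a c'.2

inductive Reach {S : Type*} (init : S) (tr : S → Act → S → Prop) : List Act → S → Prop
  | nil : Reach init tr [] init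
  | snoc {σ s a t} : Reach init tr σ s → tr s a t → Reach init tr (σ ++ [a]) t

/-- In Example 4, any process `M` over alphabet `{a₀, a₁}` such that every
state reached from the initial state by the initial `a₀` enables only `a₀`
(not `a₁`) or only `a₁` (not `a₀`) is blocking: `E ∥ M` has a maximal finite
computation, i.e. a reachable joint state with no enabled synchronization. -/
theorem example4_must_enable_both {S : Type*} (minit : S)
    (mtrans : S → Act → S → Prop)
    (h : ∀ m, mtrans minit Act.a0 m →
        (((∃ m', mtrans m Act.a0 m') ∧ ¬ (∃ m', mtrans m Act.a1 m')) ∨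
         ((∃ m', mtrans m Act.a1 m') ∧ ¬ (∃ m', mtrans m Act.a0 m')))) :
    ∃ (σ : List Act) (c : ESt × S), Reach (ESt.E, minit) (Ctrans mtrans) σ c ∧
      ∀ a c', ¬ Ctrans mtrans c a c' := by
  by_cases h0 : ∃ m, mtrans minit Act.a0 m
  · obtain ⟨m, hm⟩ := h0
    rcases h m hm with ⟨_, hna1⟩ | ⟨_, hna0⟩
    · -- go to E1; blocked since E1 needs a1 but m can't do a1
      refine ⟨[Act.a0], (ESt.E1, m), ?_, ?_⟩
      · exact Reach.snoc Reach.nil ⟨trivial, hm⟩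
      · rintro a ⟨e', m'⟩ ⟨he, hmm⟩
        cases a
        · exact he.elim
        · exact hna1 ⟨m', hmm⟩
    · refine ⟨[Act.a0], (ESt.E0, m), ?_, ?_⟩
      · exact Reach.snoc Reach.nil ⟨trivial, hm⟩
      · rintro a ⟨e', m'⟩ ⟨he, hmm⟩
        cases a
        · exact hna0 ⟨m', hmm⟩
        · exact he.elim
  · refine ⟨[], (ESt.E, minit), Reach.nil, ?_⟩
    rintro a ⟨e', m'⟩ ⟨he, hmm⟩
    cases a
    · exact h0 ⟨m', hmm⟩
    · exact he
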